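/- Let λ : H → k be the distinguished algebra map with t·h = λ(h)·t for all h ∈ H. Set Q := {q ∈ A#H | (1 # h)·q = ε(h)·q for all h ∈ H}. Then the map α : A → A#H, α(a) = Σ (t₁·a) # t₂, takes values in Q, is a bijection from A onto Q whose inverse is the restriction to Q of ν̄ (where ν̄(a # h) = φ(h)·a), and for all a, b ∈ A and h ∈ H: ν̄(α(a)·(b # h)) = Σ λ(h₂)·S̄(h₁)·(ab). (Hence the Morita context built from the invariance map X : A#H → A, X(a # h) = ε(h)a, is isomorphic to the Cohen–Fischman–Montgomery Morita context.) -/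

import Mathlib

/-!
`α(a) = (1 # t)(a # 1)`, so `α(a) ∈ Q` because `t` is a left integral in `H`, and
`ν̄ (α a) = φ(t) a = a` because `φ` is a left integral on `H`.

For the converse, tag `x ∈ A # H` as `∑ (1 # t₁) x ⊗ t₂` and expand the second leg along the
Frobenius dual basis, `x ⊗ y ↦ ∑ φ(S̄(y₁) x) y₂`. Coassociativity and `∑ S̄(g₂) g₁ = ε(g)` turn
the result into `α(ν̄ x)`; when `x ∈ Q` the tagged element is just `x ⊗ t`, which the dual
basis expands back to `x`.

Finally `ν̄(α(a)(b # h)) = ∑ φ(t₂ h) t₁ · (ab)` by coassociativity and the module-algebra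
axiom, and `∑ φ(t₂ h) t₁ = ∑ λ(h₂) S̄(h₁)`: insert `ε(h₁) = ∑ h₁₂ S̄(h₁₁)` and use
`φ((t g)₂) (t g)₁ = λ(g)`.
-/

open TensorProduct

noncomputable section

variable {k H A : Type*} [CommRing k] [Ring H] [HopfAlgebra k H]
  [Ring A] [Algebra k A]

/-- For a left `H`-module structure `act` on `A`, the map `H ⊗ A → A ⊗ H`,
`h ⊗ a ↦ (h₁ · a) ⊗ h₂`, inducing the smash product. -/
def smashRH (act : H →ₗ[k] A →ₗ[k] A) : H ⊗[k] A →ₗ[k] A ⊗[k] H :=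
  (TensorProduct.comm k H A).toLinearMap ∘ₗ
    LinearMap.lTensor H (TensorProduct.lift act) ∘ₗ
    (TensorProduct.assoc k H H A).toLinearMap ∘ₗ
    LinearMap.rTensor A (TensorProduct.comm k H H).toLinearMap ∘ₗ
    LinearMap.rTensor A Coalgebra.comul

/-- The map `H ⊗ (A ⊗ H) → A ⊗ H`, `h ⊗ (b ⊗ g) ↦ (h₁ · b) ⊗ h₂ g`. -/
def hInner (act : H →ₗ[k] A →ₗ[k] A) : H ⊗[k] (A ⊗[k] H) →ₗ[k] A ⊗[k] H :=
  LinearMap.lTensor A (LinearMap.mul' k H) ∘ₗ (TensorProduct.assoc k A H H).toLinearMap ∘ₗ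
    LinearMap.rTensor H (smashRH act) ∘ₗ (TensorProduct.assoc k H A H).symm.toLinearMap

/-- The smash product multiplication on `A # H = A ⊗ H`:
`(a # h)(b # g) = a (h₁ · b) # h₂ g`, as a linear map. -/
def hMulL (act : H →ₗ[k] A →ₗ[k] A) :
    (A ⊗[k] H) ⊗[k] (A ⊗[k] H) →ₗ[k] A ⊗[k] H :=
  LinearMap.rTensor H (LinearMap.mul' k A) ∘ₗ
    (TensorProduct.assoc k A A H).symm.toLinearMap ∘ₗ
    LinearMap.lTensor A (hInner act) ∘ₗ
    (TensorProduct.assoc k A H (A ⊗[k] H)).toLinearMap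

/-- The smash product multiplication `(a # h)(b # g) = a (h₁ · b) # h₂ g`. -/
def hMul (act : H →ₗ[k] A →ₗ[k] A) (x y : A ⊗[k] H) : A ⊗[k] H :=
  hMulL act (x ⊗ₜ[k] y)

/-- The Frobenius map `ν̄ : A # H → A`, `a # h ↦ φ(h) a`. -/
def hNu (φ : H →ₗ[k] k) : A ⊗[k] H →ₗ[k] A :=
  (TensorProduct.rid k A).toLinearMap ∘ₗ LinearMap.lTensor A φ

/-- The Frobenius element `e = t₂ ⊗ S̄(t₁) ∈ H ⊗ H`. -/
def hE (Sbar : H →ₗ[k] H) (t : H) : H ⊗[k] H :=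
  TensorProduct.map LinearMap.id Sbar
    (TensorProduct.comm k H H (Coalgebra.comul t))


open Coalgebra LinearMap

section InverseAntipode

variable {Sbar : H →ₗ[k] H}

lemma mul'_comm_map_sbar_comul (hS1 : ∀ h : H, Sbar (HopfAlgebra.antipode (R := k) h) = h)
    (hS2 : ∀ h : H, HopfAlgebra.antipode (R := k) (Sbar h) = h) :
    (mul' k H ∘ₗ (TensorProduct.comm k H H).toLinearMap ∘ₗ map Sbar id) ∘ₗ comul =
      Algebra.linearMap k H ∘ₗ counit := by
  ext g
  apply Function.LeftInverse.injective hS1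
  simp [← (ℛ k g).eq, HopfAlgebra.antipode_mul_antidistrib, hS2,
    HopfAlgebra.sum_mul_antipode_eq_smul (ℛ k g), Algebra.algebraMap_eq_smul_one]

lemma mul'_map_sbar_comm_comul (hS1 : ∀ h : H, Sbar (HopfAlgebra.antipode (R := k) h) = h)
    (hS2 : ∀ h : H, HopfAlgebra.antipode (R := k) (Sbar h) = h) :
    (mul' k H ∘ₗ map Sbar id ∘ₗ (TensorProduct.comm k H H).toLinearMap) ∘ₗ comul =
      Algebra.linearMap k H ∘ₗ counit := by
  ext g
  apply Function.LeftInverse.injective hS1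
  simp [← (ℛ k g).eq, HopfAlgebra.antipode_mul_antidistrib, hS2,
    HopfAlgebra.sum_antipode_mul_eq_smul (ℛ k g), Algebra.algebraMap_eq_smul_one]

end InverseAntipode

lemma rTensor_assoc_symm_lTensor_comul {g : H ⊗[k] H →ₗ[k] H}
    (hg : g ∘ₗ comul = Algebra.linearMap k H ∘ₗ counit) (h : H) :
    rTensor H g ((TensorProduct.assoc k H H H).symm (lTensor H comul (comul h))) = 1 ⊗ₜ h := by
  rw [coassoc_symm_apply, ← rTensor_comp_apply, hg, rTensor_comp_apply, rTensor_counit_comul]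
  simp

section Integrals

variable (φ : H →ₗ[k] k)

lemma rid_lTensor_mul_tmul_mul (v : H ⊗[k] H) (x y z : H) :
    TensorProduct.rid k H (lTensor H φ (v * (x ⊗ₜ z))) * y =
      TensorProduct.rid k H (lTensor H φ (v * ((x * y) ⊗ₜ z))) := by
  induction v using TensorProduct.induction_on with
  | zero => simp
  | tmul u w => simp [mul_assoc]
  | add u w hu hw => simp only [add_mul, map_add, hu, hw]

lemma rid_lTensor_comp_mulRight (v : H ⊗[k] H) (h : H) :
    TensorProduct.rid k H (lTensor H (φ ∘ₗ mulRight k h) v) =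
      TensorProduct.rid k H (lTensor H φ (v * (1 ⊗ₜ h))) := by
  induction v using TensorProduct.induction_on with
  | zero => simp
  | tmul u w => simp
  | add u w hu hw => simp only [add_mul, map_add, hu, hw]

variable {φ}

lemma rid_lTensor_comul_mul_comul {t : H}
    (hφ : ∀ h : H, TensorProduct.rid k H (lTensor H φ (comul h)) = φ h • (1 : H))
    (hφt : φ t = 1) {lam : H →ₐ[k] k} (hlam : ∀ h : H, t * h = lam h • t) (g : H) :
    TensorProduct.rid k H (lTensor H φ (comul t * comul g)) = lam g • (1 : H) := by
  rw [← Bialgebra.comul_mul, hφ, hlam, map_smul, hφt, smul_eq_mul, mul_one]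

end Integrals

lemma rid_lTensor_mulRight_comul_integral {Sbar : H →ₗ[k] H}
    (hS1 : ∀ h : H, Sbar (HopfAlgebra.antipode (R := k) h) = h)
    (hS2 : ∀ h : H, HopfAlgebra.antipode (R := k) (Sbar h) = h) {φ : H →ₗ[k] k} {t : H}
    (hφ : ∀ h : H, TensorProduct.rid k H (lTensor H φ (comul h)) = φ h • (1 : H))
    (hφt : φ t = 1) {lam : H →ₐ[k] k} (hlam : ∀ h : H, t * h = lam h • t) (h : H) :
    TensorProduct.rid k H (lTensor H (φ ∘ₗ mulRight k h) (comul t)) =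
      TensorProduct.rid k H (map Sbar lam.toLinearMap (comul h)) := by
  set ρ : H ⊗[k] H →ₗ[k] H :=
    (TensorProduct.rid k H).toLinearMap ∘ₗ lTensor H φ ∘ₗ mulLeft k (comul t)
  set Θ : H ⊗[k] (H ⊗[k] H) →ₗ[k] H ⊗[k] H :=
    rTensor H (mul' k H ∘ₗ (TensorProduct.comm k H H).toLinearMap ∘ₗ map Sbar id) ∘ₗ
      (TensorProduct.assoc k H H H).symm.toLinearMap
  have hρΘ : ∀ x w, ρ (Θ (x ⊗ₜ w)) = ρ w * Sbar x := by
    intro x w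
    induction w using TensorProduct.induction_on with
    | zero => simp
    | tmul y z => simp [ρ, Θ, rid_lTensor_mul_tmul_mul]
    | add u v hu hv => simp only [tmul_add, map_add, hu, hv, add_mul]
  have hmaps : ρ ∘ₗ Θ ∘ₗ lTensor H comul =
      (TensorProduct.rid k H).toLinearMap ∘ₗ map Sbar lam.toLinearMap := by
    refine TensorProduct.ext' fun x y => ?_
    simp only [comp_apply, lTensor_tmul, hρΘ]
    rw [show ρ (comul y) = lam y • 1 from rid_lTensor_comul_mul_comul hφ hφt hlam y]
    simp
  calc TensorProduct.rid k H (lTensor H (φ ∘ₗ mulRight k h) (comul t))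
      = ρ (1 ⊗ₜ h) := rid_lTensor_comp_mulRight φ _ h
    _ = ρ (Θ (lTensor H comul (comul h))) := by
        simp only [Θ, comp_apply, LinearEquiv.coe_coe,
          rTensor_assoc_symm_lTensor_comul (mul'_comm_map_sbar_comul hS1 hS2)]
    _ = _ := LinearMap.congr_fun hmaps (comul h)

section DualBasis

variable (φ : H →ₗ[k] k) (Sbar : H →ₗ[k] H)

/-- `x ⊗ y ↦ ∑ φ (S̄ y₁ * x) • y₂`. -/
def dualBasisExpand : H ⊗[k] H →ₗ[k] H :=
  (TensorProduct.lid k H).toLinearMap ∘ₗ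
    rTensor H (φ ∘ₗ mul' k H ∘ₗ map Sbar id ∘ₗ (TensorProduct.comm k H H).toLinearMap) ∘ₗ
    (TensorProduct.assoc k H H H).symm.toLinearMap ∘ₗ lTensor H comul

variable {φ Sbar}

lemma dualBasisExpand_tmul_integral {t : H}
    (hfr1 : ∀ h : H, rTensor H (mulLeft k h) (hE Sbar t) = lTensor H (mulRight k h) (hE Sbar t))
    (hfr3 : TensorProduct.rid k H (lTensor H φ (hE Sbar t)) = 1) (m : H) :
    dualBasisExpand φ Sbar (m ⊗ₜ t) = m := by
  have hleft : ∀ v, m * TensorProduct.rid k H (lTensor H φ v) =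
      TensorProduct.rid k H (lTensor H φ (rTensor H (mulLeft k m) v)) := by
    intro v
    induction v using TensorProduct.induction_on with
    | zero => simp
    | add u w hu hw => simp only [map_add, mul_add, hu, hw]
    | tmul x y => simp
  have hright : dualBasisExpand φ Sbar (m ⊗ₜ t) =
      TensorProduct.rid k H (lTensor H φ (lTensor H (mulRight k m) (hE Sbar t))) := by
    simp only [dualBasisExpand, hE, comp_apply, LinearEquiv.coe_coe, lTensor_tmul]
    induction comul (R := k) t with
    | zero => simp
    | add u w hu hw => simp only [map_add, tmul_add, hu, hw]
    | tmul x y => simp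
  rw [hright, ← hfr1, ← hleft, hfr3, mul_one]

lemma dualBasisExpand_rTensor_mulRight_comul
    (hS1 : ∀ h : H, Sbar (HopfAlgebra.antipode (R := k) h) = h)
    (hS2 : ∀ h : H, HopfAlgebra.antipode (R := k) (Sbar h) = h) (m u : H) :
    dualBasisExpand φ Sbar (rTensor H (mulRight k m) (comul u)) = φ m • u := by
  have hpull : ∀ w, dualBasisExpand φ Sbar (rTensor H (mulRight k m) w) =
      TensorProduct.lid k H (rTensor H (φ ∘ₗ mulRight k m)
        (rTensor H (mul' k H ∘ₗ map Sbar id ∘ₗ (TensorProduct.comm k H H).toLinearMap)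
          ((TensorProduct.assoc k H H H).symm (lTensor H comul w)))) := by
    intro w
    induction w using TensorProduct.induction_on with
    | zero => simp
    | add v w hv hw => simp only [map_add, hv, hw]
    | tmul x y =>
      simp only [dualBasisExpand, comp_apply, LinearEquiv.coe_coe, rTensor_tmul, lTensor_tmul]
      induction comul (R := k) y with
      | zero => simp
      | add v w hv hw => simp only [map_add, tmul_add, hv, hw]
      | tmul y z => simp [mul_assoc]
  rw [hpull, rTensor_assoc_symm_lTensor_comul (mul'_map_sbar_comm_comul hS1 hS2)]
  simp

lemma lTensor_dualBasisExpand_assoc_tmul_integral {t : H}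
    (hfr1 : ∀ h : H, rTensor H (mulLeft k h) (hE Sbar t) = lTensor H (mulRight k h) (hE Sbar t))
    (hfr3 : TensorProduct.rid k H (lTensor H φ (hE Sbar t)) = 1) (x : A ⊗[k] H) :
    lTensor A (dualBasisExpand φ Sbar) (TensorProduct.assoc k A H H (x ⊗ₜ t)) = x := by
  induction x using TensorProduct.induction_on with
  | zero => simp
  | add u v hu hv => simp only [TensorProduct.add_tmul, map_add, hu, hv]
  | tmul a m => simp [dualBasisExpand_tmul_integral hfr1 hfr3]

end DualBasis

section SmashProduct

variable (act : H →ₗ[k] A →ₗ[k] A)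

def smashMul : (A ⊗[k] H) →ₗ[k] (A ⊗[k] H) →ₗ[k] A ⊗[k] H :=
  (TensorProduct.mk k _ _).compr₂ (hMulL act)

lemma hMul_eq_smashMul (x y : A ⊗[k] H) : hMul act x y = smashMul act x y := rfl

lemma smashMul_tmul (a b : A) (h g : H) :
    smashMul act (a ⊗ₜ h) (b ⊗ₜ g) =
      map (mulLeft k a ∘ₗ act.flip b) (mulRight k g) (comul h) := by
  simp only [smashMul, compr₂_apply, mk_apply, hMulL, hInner, smashRH, comp_apply,
    LinearEquiv.coe_coe, TensorProduct.assoc_tmul, TensorProduct.assoc_symm_tmul,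
    lTensor_tmul, rTensor_tmul]
  induction comul (R := k) h with
  | zero => simp
  | add x y hx hy => simp only [TensorProduct.add_tmul, map_add, TensorProduct.tmul_add, hx, hy]
  | tmul x y => simp

lemma smashMul_one_tmul_rTensor
    (hact2 : ∀ (g h : H) (a : A), act (g * h) a = act g (act h a)) (h : H) (a : A)
    (y : H ⊗[k] H) :
    smashMul act (1 ⊗ₜ h) (rTensor H (act.flip a) y) = rTensor H (act.flip a) (comul h * y) := by
  induction y using TensorProduct.induction_on with
  | zero => simp
  | add u v hu hv => simp only [map_add, mul_add, hu, hv]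
  | tmul x z =>
    rw [rTensor_tmul, smashMul_tmul]
    induction comul (R := k) h with
    | zero => simp
    | add u v hu hv => simp only [map_add, add_mul, hu, hv]
    | tmul u w => simp [hact2]

lemma hNu_rTensor (φ : H →ₗ[k] k) (a : A) (y : H ⊗[k] H) :
    hNu φ (rTensor H (act.flip a) y) = act (TensorProduct.rid k H (lTensor H φ y)) a := by
  induction y using TensorProduct.induction_on with
  | zero => simp
  | add u v hu hv => simp only [map_add, hu, hv, LinearMap.add_apply]
  | tmul x z => simp [hNu]

lemma hNu_smashMul_rTensor_comul
    (hactmul : ∀ (h : H) (a b : A), act h (a * b) =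
      mul' k A (map (act.flip a) (act.flip b) (comul h)))
    (φ : H →ₗ[k] k) (t : H) (a b : A) (h : H) :
    hNu φ (smashMul act (rTensor H (act.flip a) (comul t)) (b ⊗ₜ h)) =
      act (TensorProduct.rid k H (lTensor H (φ ∘ₗ mulRight k h) (comul t))) (a * b) := by
  set G : H ⊗[k] (H ⊗[k] H) →ₗ[k] A :=
    (TensorProduct.rid k A).toLinearMap ∘ₗ
      map (mul' k A ∘ₗ map (act.flip a) (act.flip b)) (φ ∘ₗ mulRight k h) ∘ₗ
      (TensorProduct.assoc k H H H).symm.toLinearMap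
  have hG : ∀ y, hNu φ (smashMul act (rTensor H (act.flip a) y) (b ⊗ₜ h)) =
      G (lTensor H comul y) := by
    intro y
    induction y using TensorProduct.induction_on with
    | zero => simp
    | add u v hu hv => simp only [map_add, hu, hv, LinearMap.add_apply]
    | tmul x z =>
      rw [rTensor_tmul, smashMul_tmul, lTensor_tmul]
      induction comul (R := k) z with
      | zero => simp
      | add u v hu hv => simp only [map_add, hu, hv, tmul_add]
      | tmul u w => simp [G, hNu]
  have hmaps : G ∘ₗ (TensorProduct.assoc k H H H).toLinearMap ∘ₗ rTensor H comul =
      act.flip (a * b) ∘ₗ (TensorProduct.rid k H).toLinearMap ∘ₗ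
        lTensor H (φ ∘ₗ mulRight k h) := by
    refine TensorProduct.ext' fun x z => ?_
    simp [G, ← hactmul]
  rw [hG, ← coassoc_apply]
  exact LinearMap.congr_fun hmaps (comul t)

lemma lTensor_dualBasisExpand_assoc_rTensor_smashMul {Sbar : H →ₗ[k] H}
    (hS1 : ∀ h : H, Sbar (HopfAlgebra.antipode (R := k) h) = h)
    (hS2 : ∀ h : H, HopfAlgebra.antipode (R := k) (Sbar h) = h) (φ : H →ₗ[k] k) (t : H)
    (x : A ⊗[k] H) :
    lTensor A (dualBasisExpand φ Sbar) (TensorProduct.assoc k A H H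
      (rTensor H ((smashMul act).flip x ∘ₗ TensorProduct.mk k A H 1) (comul t))) =
      rTensor H (act.flip (hNu φ x)) (comul t) := by
  induction x using TensorProduct.induction_on with
  | zero => simp
  | add u v hu hv => simp only [map_add, rTensor_add, add_comp, LinearMap.add_apply, hu, hv]
  | tmul a m =>
    have hP : (smashMul act).flip (a ⊗ₜ m) ∘ₗ TensorProduct.mk k A H 1 =
        map (act.flip a) (mulRight k m) ∘ₗ comul := by
      ext h
      simp [smashMul_tmul]
    have hmaps : lTensor A (dualBasisExpand φ Sbar) ∘ₗ
        (TensorProduct.assoc k A H H).toLinearMap ∘ₗ rTensor H (map (act.flip a) (mulRight k m)) =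
        map (act.flip a) (dualBasisExpand φ Sbar ∘ₗ rTensor H (mulRight k m)) ∘ₗ
          (TensorProduct.assoc k H H H).toLinearMap :=
      TensorProduct.ext_threefold fun x y z => by simp
    have hinner :
        dualBasisExpand φ Sbar ∘ₗ rTensor H (mulRight k m) ∘ₗ comul = φ m • LinearMap.id := by
      ext u
      simp [dualBasisExpand_rTensor_mulRight_comul hS1 hS2]
    have := LinearMap.congr_fun hmaps (rTensor H comul (comul t))
    simp only [comp_apply, LinearEquiv.coe_coe] at this
    rw [hP, rTensor_comp_apply, this, coassoc_apply, ← comp_apply (map _ _) (lTensor H comul),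
      map_comp_lTensor, comp_assoc, hinner]
    simp [hNu, TensorProduct.map_smul_right, TensorProduct.map_smul_left, rTensor]

lemma rTensor_hNu_comul_of_invariant {Sbar : H →ₗ[k] H}
    (hS1 : ∀ h : H, Sbar (HopfAlgebra.antipode (R := k) h) = h)
    (hS2 : ∀ h : H, HopfAlgebra.antipode (R := k) (Sbar h) = h) {φ : H →ₗ[k] k} {t : H}
    (hfr1 : ∀ h : H, rTensor H (mulLeft k h) (hE Sbar t) = lTensor H (mulRight k h) (hE Sbar t))
    (hfr3 : TensorProduct.rid k H (lTensor H φ (hE Sbar t)) = 1) {q : A ⊗[k] H}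
    (hq : ∀ h : H, smashMul act (1 ⊗ₜ h) q = counit (R := k) h • q) :
    rTensor H (act.flip (hNu φ q)) (comul t) = q := by
  have hP : (smashMul act).flip q ∘ₗ TensorProduct.mk k A H 1 =
      toSpanSingleton k _ q ∘ₗ counit := by
    ext h
    simp [hq]
  rw [← lTensor_dualBasisExpand_assoc_rTensor_smashMul act hS1 hS2, hP, rTensor_comp_apply,
    rTensor_counit_comul]
  simpa using lTensor_dualBasisExpand_assoc_tmul_integral hfr1 hfr3 q

end SmashProduct

theorem cfm_morita_context_general
    (Sbar : H →ₗ[k] H)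
    (hS1 : ∀ h : H, Sbar (HopfAlgebra.antipode (R := k) h) = h)
    (hS2 : ∀ h : H, HopfAlgebra.antipode (R := k) (Sbar h) = h)
    (t : H) (ht : ∀ h : H, h * t = (Coalgebra.counit (R := k) h) • t)
    (φ : H →ₗ[k] k)
    (hφ : ∀ h : H, TensorProduct.rid k H
      (LinearMap.lTensor H φ (Coalgebra.comul h)) = φ h • (1 : H))
    (hφt : φ t = 1)
    (hfr1 : ∀ h : H, LinearMap.rTensor H (LinearMap.mulLeft k h) (hE Sbar t) =
      LinearMap.lTensor H (LinearMap.mulRight k h) (hE Sbar t))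
    (hfr3 : TensorProduct.rid k H (LinearMap.lTensor H φ (hE Sbar t)) = 1)
    -- A is a left H-module algebra
    (act : H →ₗ[k] A →ₗ[k] A)
    (hact1 : ∀ a : A, act 1 a = a)
    (hact2 : ∀ (g h : H) (a : A), act (g * h) a = act g (act h a))
    (hactmul : ∀ (h : H) (a b : A), act h (a * b) =
      LinearMap.mul' k A (TensorProduct.map (act.flip a) (act.flip b) (Coalgebra.comul h)))
    -- the distinguished algebra map λ : t h = λ(h) t
    (lam : H →ₐ[k] k) (hlam : ∀ h : H, t * h = lam h • t)
    -- Q = {q ∈ A # H | (1 # h) q = ε(h) q for all h}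
    (Q : Set (A ⊗[k] H))
    (hQ : Q = {q : A ⊗[k] H | ∀ h : H,
      hMul act (((1 : A) ⊗ₜ[k] h)) q = (Coalgebra.counit (R := k) h) • q})
    -- α(a) = (t₁ · a) # t₂
    (α : A → A ⊗[k] H)
    (hα : ∀ a : A, α a = LinearMap.rTensor H (act.flip a) (Coalgebra.comul t)) :
    -- α takes values in Q
    (∀ a : A, α a ∈ Q) ∧
    -- ν̄ ∘ α = id
    (∀ a : A, hNu φ (α a) = a) ∧
    -- α ∘ ν̄ = id on Q
    (∀ q ∈ Q, α (hNu φ q) = q) ∧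
    -- hence α : A → Q is a bijection
    (∀ a a' : A, α a = α a' → a = a') ∧
    (∀ q ∈ Q, ∃ a : A, α a = q) ∧
    -- the transported action is the CFM action : ν̄(α(a)(b # h)) = λ(h₂) S̄(h₁)·(ab)
    (∀ (a b : A) (h : H),
      hNu φ (hMul act (α a) (b ⊗ₜ[k] h)) =
        TensorProduct.rid k A
          (TensorProduct.map (act.flip (a * b) ∘ₗ Sbar) lam.toLinearMap
            (Coalgebra.comul h))) := by
  have hν : ∀ a : A, hNu φ (α a) = a := fun a => by
    rw [hα, hNu_rTensor, hφ, hφt, one_smul, hact1]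
  have hαν : ∀ q ∈ Q, α (hNu φ q) = q := fun q hq => by
    rw [hQ] at hq
    rw [hα]
    exact rTensor_hNu_comul_of_invariant act hS1 hS2 hfr1 hfr3 hq
  refine ⟨fun a => ?_, hν, hαν, fun a a' h => ?_, fun q hq => ⟨_, hαν q hq⟩, fun a b h => ?_⟩
  · rw [hQ]
    intro h
    rw [hα, hMul_eq_smashMul, smashMul_one_tmul_rTensor act hact2, ← Bialgebra.comul_mul, ht,
      map_smul, map_smul]
  · rw [← hν a, ← hν a', h]
  · rw [hα, hMul_eq_smashMul, hNu_smashMul_rTensor_comul act hactmul,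
      rid_lTensor_mulRight_comul_integral hS1 hS2 hφ hφt hlam]
    induction comul (R := k) h with
    | zero => simp
    | add u v hu hv => simp only [map_add, LinearMap.add_apply, hu, hv]
    | tmul x y => simp

/-- The CFM bimodule map `α : A → A # H`, `α(a) = (t₁ · a) # t₂`, is a bijection
of `A` onto `Q = {q | (1 # h) q = ε(h) q}` with inverse the restriction of `ν̄`,
and transports the right `A # H`-action into the Cohen–Fischman–Montgomery action
`a ↼ (b # h) = λ(h₂) S̄(h₁) · (ab)`. -/
theorem cfm_morita_context
    (Sbar : H →ₗ[k] H)
    (hS1 : ∀ h : H, Sbar (HopfAlgebra.antipode (R := k) h) = h)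
    (hS2 : ∀ h : H, HopfAlgebra.antipode (R := k) (Sbar h) = h)
    (t : H) (ht : ∀ h : H, h * t = (Coalgebra.counit (R := k) h) • t)
    (φ : H →ₗ[k] k)
    (hφ : ∀ h : H, TensorProduct.rid k H
      (LinearMap.lTensor H φ (Coalgebra.comul h)) = φ h • (1 : H))
    (hφt : φ t = 1)
    (hfr1 : ∀ h : H, LinearMap.rTensor H (LinearMap.mulLeft k h) (hE Sbar t) =
      LinearMap.lTensor H (LinearMap.mulRight k h) (hE Sbar t))
    (hfr2 : TensorProduct.lid k H (LinearMap.rTensor H φ (hE Sbar t)) = 1)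
    (hfr3 : TensorProduct.rid k H (LinearMap.lTensor H φ (hE Sbar t)) = 1)
    -- A is a left H-module algebra
    (act : H →ₗ[k] A →ₗ[k] A)
    (hact1 : ∀ a : A, act 1 a = a)
    (hact2 : ∀ (g h : H) (a : A), act (g * h) a = act g (act h a))
    (hactmul : ∀ (h : H) (a b : A), act h (a * b) =
      LinearMap.mul' k A (TensorProduct.map (act.flip a) (act.flip b) (Coalgebra.comul h)))
    (hactone : ∀ h : H, act h (1 : A) = (Coalgebra.counit (R := k) h) • (1 : A))
    -- the distinguished algebra map λ : t h = λ(h) t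
    (lam : H →ₐ[k] k) (hlam : ∀ h : H, t * h = lam h • t)
    -- Q = {q ∈ A # H | (1 # h) q = ε(h) q for all h}
    (Q : Set (A ⊗[k] H))
    (hQ : Q = {q : A ⊗[k] H | ∀ h : H,
      hMul act (((1 : A) ⊗ₜ[k] h)) q = (Coalgebra.counit (R := k) h) • q})
    -- α(a) = (t₁ · a) # t₂
    (α : A → A ⊗[k] H)
    (hα : ∀ a : A, α a = LinearMap.rTensor H (act.flip a) (Coalgebra.comul t)) :
    -- α takes values in Q
    (∀ a : A, α a ∈ Q) ∧
    -- ν̄ ∘ α = id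
    (∀ a : A, hNu φ (α a) = a) ∧
    -- α ∘ ν̄ = id on Q
    (∀ q ∈ Q, α (hNu φ q) = q) ∧
    -- hence α : A → Q is a bijection
    (∀ a a' : A, α a = α a' → a = a') ∧
    (∀ q ∈ Q, ∃ a : A, α a = q) ∧
    -- the transported action is the CFM action : ν̄(α(a)(b # h)) = λ(h₂) S̄(h₁)·(ab)
    (∀ (a b : A) (h : H),
      hNu φ (hMul act (α a) (b ⊗ₜ[k] h)) =
        TensorProduct.rid k A
          (TensorProduct.map (act.flip (a * b) ∘ₗ Sbar) lam.toLinearMap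
            (Coalgebra.comul h))) :=
  cfm_morita_context_general Sbar hS1 hS2 t ht φ hφ hφt hfr1 hfr3 act hact1 hact2 hactmul lam hlam Q
    hQ α hα

end
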